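/- A disjoint topological sum X = ⊕_{j∈J} X_j of spaces, each of which embeds into an Eberlein compact, itself embeds into an Eberlein compact. More precisely: if each X_j has a σ-strongly point-finite almost subbase α_j, then the family {X_j : j ∈ J} ∪ ⋃_j α_j is a σ-strongly point-finite almost subbase of X. -/

import Mathlib

/-!
Zero- and cozero-sets of a summand `X j` stay zero- and cozero-sets of the sum (extend the
witnessing function by `1`, resp. `0`), so U-representations transport along `Sigma.mk j`.
A nonempty set `Sigma.mk j '' V` determines `j` and `V`, which makes the transported
representations well defined; the summands are clopen and get the constant representation.
The summands together with the transported subbases generate the sum topology.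
Sets in different summands are disjoint, so an infinite subfamily either lies in a single
summand, where strong point-finiteness of the pieces of `α j` applies, or contains two
disjoint members.
-/

/-- `A` is a zero-set of `Z`. -/
def IsZeroSetD {Z : Type*} [TopologicalSpace Z] (A : Set Z) : Prop :=
  ∃ f : C(Z, ℝ), (∀ x, f x ∈ Set.Icc (0 : ℝ) 1) ∧ A = f ⁻¹' {0}

/-- `A` is a cozero-set of `Z`. -/
def IsCozSetD {Z : Type*} [TopologicalSpace Z] (A : Set Z) : Prop :=
  ∃ f : C(Z, ℝ), (∀ x, f x ∈ Set.Icc (0 : ℝ) 1) ∧ A = (f ⁻¹' {0})ᶜ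

/-- `u` is a U-representation of `V`: `V = ⋃_{n ≥ 1} u n`, the sequence is increasing,
odd-indexed members are zero-sets and even-indexed members are cozero-sets. -/
def IsURep {Z : Type*} [TopologicalSpace Z] (u : ℕ → Set Z) (V : Set Z) : Prop :=
  V = (⋃ n, ⋃ (_ : 1 ≤ n), u n) ∧
    (∀ n, 1 ≤ n → u n ⊆ u (n + 1)) ∧
    (∀ n, 1 ≤ n → IsZeroSetD (u (2 * n - 1))) ∧
    (∀ n, 1 ≤ n → IsCozSetD (u (2 * n)))

/-- `α` is an almost subbase of `Z`: there are U-representations `u V` of the members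
`V ∈ α` such that `α ∪ {Z \ u V (2n-1) : V ∈ α, n ≥ 1}` generates the topology. -/
def IsAlmostSubbase {Z : Type*} [t : TopologicalSpace Z] (α : Set (Set Z)) : Prop :=
  ∃ u : Set Z → ℕ → Set Z, (∀ V ∈ α, IsURep (u V) V) ∧
    t = TopologicalSpace.generateFrom
      (α ∪ {W | ∃ V ∈ α, ∃ n : ℕ, 1 ≤ n ∧ W = (u V (2 * n - 1))ᶜ})

/-- `α` is strongly point-finite. -/
def StronglyPF {Z : Type*} (α : Set (Set Z)) : Prop :=
  ∀ μ ⊆ α, μ.Countable → μ.Infinite → ∃ μ' ⊆ μ, μ'.Finite ∧ ⋂₀ μ' = ∅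

/-- `α` is σ-strongly point-finite: a countable union of strongly point-finite families. -/
def SigmaStronglyPF {Z : Type*} (α : Set (Set Z)) : Prop :=
  ∃ β : ℕ → Set (Set Z), α = (⋃ n, β n) ∧ ∀ n, StronglyPF (β n)

open Set TopologicalSpace Function

section ZeroSets

variable {Z : Type*} [TopologicalSpace Z]

lemma IsZeroSetD.isClosed {A : Set Z} (h : IsZeroSetD A) : IsClosed A := by
  obtain ⟨f, -, rfl⟩ := h
  exact isClosed_singleton.preimage f.continuous

lemma isZeroSetD_univ : IsZeroSetD (univ : Set Z) :=
  ⟨ContinuousMap.const Z 0, fun _ => left_mem_Icc.2 zero_le_one, by ext; simp⟩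

lemma isCozSetD_univ : IsCozSetD (univ : Set Z) :=
  ⟨ContinuousMap.const Z 1, fun _ => right_mem_Icc.2 zero_le_one, by ext; simp⟩

lemma IsURep.const {A : Set Z} (hz : IsZeroSetD A) (hc : IsCozSetD A) :
    IsURep (fun _ => A) A := by
  refine ⟨?_, fun _ _ => subset_rfl, fun _ _ => hz, fun _ _ => hc⟩
  ext
  simp only [mem_iUnion, exists_prop]
  exact ⟨fun h => ⟨1, le_rfl, h⟩, fun ⟨_, _, h⟩ => h⟩

lemma IsURep.subset {u : ℕ → Set Z} {V : Set Z} (h : IsURep u V) {n : ℕ} (hn : 1 ≤ n) :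
    u n ⊆ V :=
  h.1 ▸ subset_iUnion₂ (s := fun m (_ : 1 ≤ m) => u m) n hn

end ZeroSets

section StronglyPF

variable {Z : Type*}

lemma StronglyPF.of_finite {α : Set (Set Z)} (h : α.Finite) : StronglyPF α :=
  fun _ hμ _ hinf => (hinf (h.subset hμ)).elim

lemma StronglyPF.union {α β : Set (Set Z)} (hα : StronglyPF α) (hβ : StronglyPF β) :
    StronglyPF (α ∪ β) := by
  intro μ hμ hc hinf
  rw [← inter_eq_left.2 hμ, inter_union_distrib_left] at hinf
  rcases infinite_union.1 hinf with h | h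
  · obtain ⟨ν, hν, hfin, hempty⟩ := hα _ inter_subset_right (hc.mono inter_subset_left) h
    exact ⟨ν, hν.trans inter_subset_left, hfin, hempty⟩
  · obtain ⟨ν, hν, hfin, hempty⟩ := hβ _ inter_subset_right (hc.mono inter_subset_left) h
    exact ⟨ν, hν.trans inter_subset_left, hfin, hempty⟩

lemma StronglyPF.iUnion_of_disjoint {ι : Type*} {γ : ι → Set (Set Z)}
    (hγ : ∀ i, StronglyPF (γ i))
    (hdisj : ∀ i j, i ≠ j → ∀ S ∈ γ i, ∀ T ∈ γ j, Disjoint S T) :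
    StronglyPF (⋃ i, γ i) := by
  intro μ hμ hc hinf
  obtain ⟨S₀, hS₀⟩ := hinf.nonempty
  obtain ⟨i, hi⟩ := mem_iUnion.1 (hμ hS₀)
  by_cases hall : μ ⊆ γ i
  · exact hγ i μ hall hc hinf
  obtain ⟨S, hS, hSi⟩ := not_subset.1 hall
  obtain ⟨j, hj⟩ := mem_iUnion.1 (hμ hS)
  have hji : j ≠ i := by rintro rfl; exact hSi hj
  refine ⟨{S, S₀}, pair_subset hS hS₀, toFinite _, ?_⟩
  rw [sInter_pair]
  exact (hdisj j i hji S hj S₀ hi).inter_eq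

lemma StronglyPF.image {Y : Type*} {g : Z → Y} (hg : Injective g) {β : Set (Set Z)}
    (h : StronglyPF β) : StronglyPF (Set.image g '' β) := by
  intro μ hμ hc hinf
  set μs := {V ∈ β | g '' V ∈ μ}
  have hcover : μ ⊆ Set.image g '' μs := by
    intro S hS
    obtain ⟨V, hV, rfl⟩ := hμ hS
    exact ⟨V, ⟨hV, hS⟩, rfl⟩
  have hμs : μs.Infinite := fun hfin => hinf ((hfin.image _).subset hcover)
  obtain ⟨ν, hν, hfin, hempty⟩ := h μs (fun V hV => hV.1)
    ((hc.preimage (image_injective.2 hg)).mono fun V hV => hV.2) hμs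
  -- `ν` may be empty; adding a member of `μs` keeps the intersection empty
  obtain ⟨V₀, hV₀⟩ := hμs.nonempty
  refine ⟨Set.image g '' insert V₀ ν, ?_, (hfin.insert V₀).image _, ?_⟩
  · rintro _ ⟨V, hV, rfl⟩
    rcases hV with rfl | hV
    exacts [hV₀.2, (hν hV).2]
  refine eq_empty_of_forall_notMem fun x hx => ?_
  obtain ⟨y, -, rfl⟩ := hx _ (mem_image_of_mem _ (mem_insert V₀ ν))
  have hy : y ∈ ⋂₀ ν := fun V hV =>
    hg.mem_set_image.1 (hx _ (mem_image_of_mem _ (mem_insert_of_mem _ hV)))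
  rwa [hempty] at hy

lemma StronglyPF.sigmaStronglyPF {α : Set (Set Z)} (h : StronglyPF α) : SigmaStronglyPF α :=
  ⟨fun _ => α, (iUnion_const α).symm, fun _ => h⟩

lemma SigmaStronglyPF.union {α β : Set (Set Z)} (hα : SigmaStronglyPF α)
    (hβ : SigmaStronglyPF β) : SigmaStronglyPF (α ∪ β) := by
  obtain ⟨a, rfl, ha⟩ := hα
  obtain ⟨b, rfl, hb⟩ := hβ
  exact ⟨fun n => a n ∪ b n, (iUnion_union_distrib a b).symm, fun n => (ha n).union (hb n)⟩

end StronglyPF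

section SigmaSets

variable {J : Type*} {X : J → Type*}

lemma disjoint_image_sigmaMk {i j : J} (h : i ≠ j) (A : Set (X i)) (B : Set (X j)) :
    Disjoint (Sigma.mk i '' A) (Sigma.mk j '' B) := by
  rw [disjoint_left]
  rintro _ ⟨a, -, rfl⟩ ⟨b, -, hb⟩
  exact h (congrArg Sigma.fst hb).symm

lemma eq_of_image_sigmaMk_eq {i j : J} {A : Set (X i)} {B : Set (X j)}
    (h : Sigma.mk i '' A = Sigma.mk j '' B) (hA : A.Nonempty) : i = j := by
  by_contra hij
  obtain ⟨y, hy⟩ := hA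
  exact (disjoint_image_sigmaMk hij A B).ne_of_mem (mem_image_of_mem _ hy)
    (h ▸ mem_image_of_mem _ hy) rfl

lemma StronglyPF.iUnion_image_sigmaMk {β : ∀ j, Set (Set (X j))} (h : ∀ j, StronglyPF (β j)) :
    StronglyPF (⋃ j, Set.image (Sigma.mk j) '' β j) :=
  .iUnion_of_disjoint (fun j => (h j).image sigma_mk_injective) <| by
    rintro i j hij _ ⟨A, -, rfl⟩ _ ⟨B, -, rfl⟩
    exact disjoint_image_sigmaMk hij A B

variable (α : ∀ j, Set (Set (X j))) (u : ∀ j, Set (X j) → ℕ → Set (X j))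

def sigmaFamily : Set (Set (Σ j, X j)) :=
  {S | ∃ j, S = range (Sigma.mk j)} ∪ {S | ∃ j, ∃ V ∈ α j, S = Sigma.mk j '' V}

open Classical in
noncomputable def sigmaURep (W : Set (Σ j, X j)) : ℕ → Set (Σ j, X j) :=
  if h : ∃ p : Σ j, Set (X j), p.2 ∈ α p.1 ∧ W = Sigma.mk p.1 '' p.2 then
    fun n => Sigma.mk h.choose.1 '' u h.choose.1 h.choose.2 n
  else fun _ => W

variable {α u}

lemma sigmaURep_image_sigmaMk {j : J} {V : Set (X j)} (hV : V ∈ α j) (hne : V.Nonempty) :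
    sigmaURep α u (Sigma.mk j '' V) = fun n => Sigma.mk j '' u j V n := by
  have h : ∃ p : Σ j, Set (X j), p.2 ∈ α p.1 ∧ Sigma.mk j '' V = Sigma.mk p.1 '' p.2 :=
    ⟨⟨j, V⟩, hV, rfl⟩
  rw [sigmaURep, dif_pos h]
  obtain ⟨-, hp⟩ := h.choose_spec
  generalize h.choose = p at hp ⊢
  obtain ⟨i, A⟩ := p
  obtain rfl := eq_of_image_sigmaMk_eq hp hne
  obtain rfl := image_injective.2 sigma_mk_injective hp
  rfl

end SigmaSets

section SigmaExtend

variable {J : Type*} {X : J → Type*} [∀ j, TopologicalSpace (X j)]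

open Classical in
noncomputable def sigmaExtend {Y : Type*} [TopologicalSpace Y] (j : J) (f : C(X j, Y)) (c : Y) :
    C((Σ i, X i), Y) :=
  ContinuousMap.sigma (update (fun i => ContinuousMap.const (X i) c) j f)

variable {Y : Type*} [TopologicalSpace Y] {j : J} {f : C(X j, Y)} {c : Y}

lemma sigmaExtend_mk_self (y : X j) : sigmaExtend j f c ⟨j, y⟩ = f y := by
  simp [sigmaExtend]

lemma sigmaExtend_mk_of_ne {i : J} (h : i ≠ j) (y : X i) : sigmaExtend j f c ⟨i, y⟩ = c := by
  classical
  simp [sigmaExtend, update_of_ne h]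

lemma sigmaExtend_mem {S : Set Y} (hf : ∀ y, f y ∈ S) (hc : c ∈ S) (x : Σ i, X i) :
    sigmaExtend j f c x ∈ S := by
  obtain ⟨i, y⟩ := x
  rcases eq_or_ne i j with rfl | h
  · rw [sigmaExtend_mk_self]; exact hf y
  · rw [sigmaExtend_mk_of_ne h]; exact hc

lemma preimage_sigmaExtend {S : Set Y} (hc : c ∉ S) :
    sigmaExtend j f c ⁻¹' S = Sigma.mk j '' (f ⁻¹' S) := by
  ext ⟨i, y⟩
  rcases eq_or_ne i j with rfl | h
  · simp [sigmaExtend_mk_self, sigma_mk_injective.mem_set_image]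
  · simp only [mem_preimage, sigmaExtend_mk_of_ne h, hc, false_iff]
    rintro ⟨x, -, hx⟩
    exact h (congrArg Sigma.fst hx).symm

end SigmaExtend

section Sum

variable {J : Type*} {X : J → Type*} [t : ∀ j, TopologicalSpace (X j)]
  {α : ∀ j, Set (Set (X j))} {u : ∀ j, Set (X j) → ℕ → Set (X j)}

lemma IsZeroSetD.image_sigmaMk {j : J} {A : Set (X j)} (hA : IsZeroSetD A) :
    IsZeroSetD (Sigma.mk j '' A) := by
  obtain ⟨f, hf, rfl⟩ := hA
  exact ⟨sigmaExtend j f 1, sigmaExtend_mem hf (right_mem_Icc.2 zero_le_one),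
    (preimage_sigmaExtend (by simp)).symm⟩

lemma IsCozSetD.image_sigmaMk {j : J} {A : Set (X j)} (hA : IsCozSetD A) :
    IsCozSetD (Sigma.mk j '' A) := by
  obtain ⟨f, hf, rfl⟩ := hA
  refine ⟨sigmaExtend j f 0, sigmaExtend_mem hf (left_mem_Icc.2 zero_le_one), ?_⟩
  rw [← preimage_compl, ← preimage_compl, preimage_sigmaExtend (by simp)]

lemma IsURep.image_sigmaMk (j : J) {u : ℕ → Set (X j)} {V : Set (X j)} (h : IsURep u V) :
    IsURep (fun n => Sigma.mk j '' u n) (Sigma.mk j '' V) := by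
  obtain ⟨hV, hmono, hzero, hcoz⟩ := h
  refine ⟨?_, fun n hn => image_mono (hmono n hn), fun n hn => (hzero n hn).image_sigmaMk,
    fun n hn => (hcoz n hn).image_sigmaMk⟩
  simp only [hV, image_iUnion]

lemma isURep_range_sigmaMk (j : J) :
    IsURep (fun _ => range (Sigma.mk j)) (range (Sigma.mk j) : Set (Σ i, X i)) := by
  rw [← image_univ]
  exact .const isZeroSetD_univ.image_sigmaMk isCozSetD_univ.image_sigmaMk

lemma isURep_sigmaURep (hu : ∀ j, ∀ V ∈ α j, IsURep (u j V) V) {W : Set (Σ j, X j)}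
    (hW : W ∈ sigmaFamily α) : IsURep (sigmaURep α u W) W := by
  unfold sigmaURep
  split_ifs with h
  · obtain ⟨hp, hW⟩ := h.choose_spec
    have := (hu _ _ hp).image_sigmaMk h.choose.1
    rwa [← hW] at this
  · rcases hW with ⟨j, rfl⟩ | ⟨j, V, hV, rfl⟩
    · exact isURep_range_sigmaMk j
    · exact absurd ⟨⟨j, V⟩, hV, rfl⟩ h

lemma generateOpen_image_sigmaMk {T : Set (Set (Σ j, X j))} {j : J} {s : Set (Set (X j))}
    (hs : t j = generateFrom s) (hrange : GenerateOpen T (range (Sigma.mk j)))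
    (hgen : ∀ B ∈ s, GenerateOpen T (Sigma.mk j '' B)) {A : Set (X j)} (hA : IsOpen A) :
    GenerateOpen T (Sigma.mk j '' A) := by
  rw [hs] at hA
  induction hA with
  | basic B hB => exact hgen B hB
  | univ => rwa [image_univ]
  | inter A B _ _ hA hB => rw [image_inter sigma_mk_injective]; exact .inter _ _ hA hB
  | sUnion S _ hS => rw [image_sUnion]; exact .sUnion _ (forall_mem_image.2 hS)

lemma instTopologicalSpaceSigma_eq_generateFrom {T : Set (Set (Σ j, X j))}
    (hT : ∀ W ∈ T, IsOpen W) (s : ∀ j, Set (Set (X j))) (hs : ∀ j, t j = generateFrom (s j))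
    (hrange : ∀ j, GenerateOpen T (range (Sigma.mk j)))
    (hgen : ∀ j, ∀ B ∈ s j, GenerateOpen T (Sigma.mk j '' B)) :
    instTopologicalSpaceSigma = generateFrom T := by
  refine le_antisymm (le_generateFrom hT) fun O hO => ?_
  rw [← iUnion_image_preimage_sigma_mk_eq_self O]
  exact @isOpen_iUnion _ _ (generateFrom T) _ fun j =>
    generateOpen_image_sigmaMk (hs j) (hrange j) (hgen j) (hO.preimage continuous_sigmaMk)

theorem isAlmostSubbase_sigmaFamily (h : ∀ j, IsAlmostSubbase (α j)) :
    IsAlmostSubbase (sigmaFamily α) := by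
  choose u hu ht using h
  refine ⟨sigmaURep α u, fun W hW => isURep_sigmaURep hu hW,
    instTopologicalSpaceSigma_eq_generateFrom ?_ _ ht
      (fun j => .basic _ (Or.inl (Or.inl ⟨j, rfl⟩))) ?_⟩
  · rintro W ((⟨j, rfl⟩ | ⟨j, V, hV, rfl⟩) | ⟨W, hW, n, hn, rfl⟩)
    · exact isOpen_range_sigmaMk
    · exact isOpenMap_sigmaMk _ (ht j ▸ isOpen_generateFrom_of_mem (Or.inl hV))
    · exact ((isURep_sigmaURep hu hW).2.2.1 n hn).isClosed.isOpen_compl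
  rintro j B (hB | ⟨V, hV, n, hn, rfl⟩)
  · exact .basic _ (Or.inl (Or.inr ⟨j, B, hB, rfl⟩))
  rcases V.eq_empty_or_nonempty with rfl | hne
  · rw [subset_empty_iff.1 ((hu j ∅ hV).subset (by omega : 1 ≤ 2 * n - 1)), compl_empty,
      image_univ]
    exact .basic _ (Or.inl (Or.inl ⟨j, rfl⟩))
  rw [image_compl_eq_range_sdiff_image sigma_mk_injective, sdiff_eq]
  refine .inter _ _ (.basic _ (Or.inl (Or.inl ⟨j, rfl⟩))) (.basic _ (Or.inr ?_))
  exact ⟨_, Or.inr ⟨j, V, hV, rfl⟩, n, hn, by rw [sigmaURep_image_sigmaMk hV hne]⟩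

end Sum

theorem sigmaStronglyPF_sigmaFamily {J : Type*} {X : J → Type*} {α : ∀ j, Set (Set (X j))}
    (h : ∀ j, SigmaStronglyPF (α j)) : SigmaStronglyPF (sigmaFamily α) := by
  choose β hβ hβpf using h
  have hrange : {S : Set (Σ j, X j) | ∃ j, S = range (Sigma.mk j)} =
      ⋃ j, Set.image (Sigma.mk j) '' {univ} := by
    ext; simp [eq_comm]
  refine .union (hrange ▸ (StronglyPF.iUnion_image_sigmaMk fun j =>
      .of_finite (finite_singleton univ)).sigmaStronglyPF)
    ⟨fun m => ⋃ j, Set.image (Sigma.mk j) '' β j m, ?_,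
      fun m => .iUnion_image_sigmaMk fun j => hβpf j m⟩
  ext S
  simp only [hβ, mem_iUnion, mem_image]
  constructor
  · rintro ⟨j, V, ⟨m, hV⟩, rfl⟩
    exact ⟨m, j, V, hV, rfl⟩
  · rintro ⟨m, j, V, hV, rfl⟩
    exact ⟨j, V, ⟨m, hV⟩, rfl⟩

/-- If each summand `X j` of a disjoint topological sum has a σ-strongly point-finite
almost subbase `α j`, then the family `{X j : j ∈ J} ∪ ⋃ j, α j` (transferred to the
sum) is a σ-strongly point-finite almost subbase of the sum `Σ j, X j`. -/
theorem stmt_14 {J : Type*} {X : J → Type*} [∀ j, TopologicalSpace (X j)]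
    (α : ∀ j, Set (Set (X j)))
    (hsub : ∀ j, IsAlmostSubbase (α j))
    (hspf : ∀ j, SigmaStronglyPF (α j)) :
    IsAlmostSubbase
        ({S : Set (Σ j, X j) | ∃ j, S = Set.range (Sigma.mk j)} ∪
          {S : Set (Σ j, X j) | ∃ j, ∃ V ∈ α j, S = Sigma.mk j '' V}) ∧
      SigmaStronglyPF
        ({S : Set (Σ j, X j) | ∃ j, S = Set.range (Sigma.mk j)} ∪
          {S : Set (Σ j, X j) | ∃ j, ∃ V ∈ α j, S = Sigma.mk j '' V}) :=
  ⟨isAlmostSubbase_sigmaFamily hsub, sigmaStronglyPF_sigmaFamily hspf⟩
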